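/- arXiv:2205.12415 — 2 statements merged into one kernel-verified Lean document; each statement's English description precedes it below -/
import Mathlib

section
/- Let α be a composition, n ≥ ℓ(α). For σ ∈ C_α, let μ'_{C_α}(σ) = ∑_{σ̃ ∈ π^{-1}(σ)} (-1)^{barred(σ̃)}, summing over preimages under the bar-forgetting map π: C̃_α → C_α. Then ∑_{σ ∈ C_α} μ'_{C_α}(σ) y^σ = ∑_{σ ∈ P_α} μ_{P_α}(σ) y^σ, i.e., the signed generating function over the combinatorial set C̃_α equals the Möbius-weighted sum over the poset P_α. -/
open MvPolynomial Finset
open scoped Classical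

/-- The positive part of a weak composition: delete the zero entries. -/
def posList (l : List ℕ) : List ℕ := l.filter (fun x => x ≠ 0)

/-- `S_α`: length-`n` tuples of nonnegative integers whose positive part is `α`. -/
def Sset (α : List ℕ) (n : ℕ) : Set (Fin n → ℕ) :=
  {b | posList (List.ofFn b) = α}

/-- `P_α`: componentwise maxima of nonempty collections of elements of `S_α`. -/
def Pset (α : List ℕ) (n : ℕ) : Set (Fin n → ℕ) :=
  {σ | ∃ T : Finset (Fin n → ℕ), T.Nonempty ∧ (↑T : Set (Fin n → ℕ)) ⊆ Sset α n ∧ σ = T.sup id}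

/-- The local moves (M.1): `0p ↦ p0` and (M.2'): `0p ↦ pp` for `p > 0`. -/
inductive GlideMove : List ℕ → List ℕ → Prop
  | m1 (u v : List ℕ) (p : ℕ) (hp : 0 < p) :
      GlideMove (u ++ 0 :: p :: v) (u ++ p :: 0 :: v)
  | m2 (u v : List ℕ) (p : ℕ) (hp : 0 < p) :
      GlideMove (u ++ 0 :: p :: v) (u ++ p :: p :: v)

/-- `C_α`: strings obtainable from elements of `S_α` by iterated local moves. -/
def Cset (α : List ℕ) (n : ℕ) : Set (Fin n → ℕ) :=
  {σ | ∃ b ∈ Sset α n, Relation.ReflTransGen GlideMove (List.ofFn b) (List.ofFn σ)}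

-- Barred alphabet: `Sum.inl p` is the unbarred symbol `p`; `Sum.inr p` is `p̄`.
/-- The local moves (M.1): `0p ↦ p0` and (M.2): `0p ↦ p p̄` for unbarred `p > 0`. -/
inductive BGlideMove : List (ℕ ⊕ ℕ) → List (ℕ ⊕ ℕ) → Prop
  | m1 (u v : List (ℕ ⊕ ℕ)) (p : ℕ) (hp : 0 < p) :
      BGlideMove (u ++ Sum.inl 0 :: Sum.inl p :: v) (u ++ Sum.inl p :: Sum.inl 0 :: v)
  | m2 (u v : List (ℕ ⊕ ℕ)) (p : ℕ) (hp : 0 < p) :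
      BGlideMove (u ++ Sum.inl 0 :: Sum.inl p :: v) (u ++ Sum.inl p :: Sum.inr p :: v)

/-- `C̃_α`: barred strings obtainable from elements of `S_α` by iterated barred moves. -/
def CtildeSet (α : List ℕ) (n : ℕ) : Set (List (ℕ ⊕ ℕ)) :=
  {s | ∃ b ∈ Sset α n, Relation.ReflTransGen BGlideMove ((List.ofFn b).map Sum.inl) s}

/-- The bar-forgetting map `π`. -/
def unbar (s : List (ℕ ⊕ ℕ)) : List ℕ := s.map (Sum.elim id id)

/-- The number of barred symbols in a string. -/
def barredCount (s : List (ℕ ⊕ ℕ)) : ℕ := (s.filter (fun x => x.isRight)).length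

/-!
Both sides are determined by their cumulative sums `p ↦ ∑_{q ≤ p} c(q)`: a minimal point where
two coefficient functions differ would make their cumulative sums differ there. So it suffices
that both cumulative sums equal `[∃ b ∈ S_α, b ≤ p]`.

For `P_α`, the elements below `p` are exactly those below `p*`, the join of the elements of `S_α`
below `p`, and `∑_{q ≤ p*} μ(q) = 1`.

For `C̃_α`, its strings are exactly those whose nonzero letters read `a₁ ā₁* a₂ ā₂* ⋯ aₖ āₖ*`
(`BarPattern`). The signed count of such strings lying below `p` can be computed letter by
letter: it is `1` if `α` is dominated by a subsequence of `p` (equivalently, some element of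
`S_α` lies below `p`) and `0` otherwise.
-/

namespace Finset

variable {ι : Type*} [PartialOrder ι]

theorem eqOn_of_sum_filter_le_eq {M : Type*} [AddCommGroup M] {U : Finset ι} {f g : ι → M}
    (h : ∀ p ∈ U, ∑ q ∈ U with q ≤ p, f q = ∑ q ∈ U with q ≤ p, g q) :
    Set.EqOn f g U := by
  by_contra hne
  obtain ⟨p, hp⟩ := (U.filter fun q => f q ≠ g q).exists_minimal <| by
    simpa [Set.EqOn, Finset.Nonempty] using hne
  obtain ⟨hpU, hfp⟩ := mem_filter.mp hp.prop
  have hbelow : ∀ q ∈ (U.filter (· ≤ p)).erase p, f q = g q := by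
    intro q hq
    obtain ⟨hqp, hqU, hqle⟩ := by simpa using hq
    by_contra hfq
    exact hqp (hp.eq_of_le (mem_filter.mpr ⟨hqU, hfq⟩) hqle)
  have hp_mem : p ∈ U.filter (· ≤ p) := mem_filter.mpr ⟨hpU, le_rfl⟩
  have := h p hpU
  rw [← add_sum_erase _ _ hp_mem, ← add_sum_erase _ _ hp_mem, sum_congr rfl hbelow] at this
  exact hfp (add_right_cancel this)

theorem sum_smul_eq_of_sum_filter_le_eq {R N : Type*} [Ring R] [AddCommGroup N] [Module R N]
    {A B : Finset ι} {f g : ι → R} (m : ι → N)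
    (h : ∀ p ∈ A ∪ B, ∑ q ∈ A with q ≤ p, f q = ∑ q ∈ B with q ≤ p, g q) :
    ∑ q ∈ A, f q • m q = ∑ q ∈ B, g q • m q := by
  set F : ι → R := fun q => if q ∈ A then f q else 0
  set G : ι → R := fun q => if q ∈ B then g q else 0
  have hF : ∀ p, ∑ q ∈ A ∪ B with q ≤ p, F q = ∑ q ∈ A with q ≤ p, f q := fun p => by
    rw [sum_ite_mem, filter_inter, union_inter_cancel_left]
  have hG : ∀ p, ∑ q ∈ A ∪ B with q ≤ p, G q = ∑ q ∈ B with q ≤ p, g q := fun p => by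
    rw [sum_ite_mem, filter_inter, union_inter_cancel_right]
  have hFG : Set.EqOn F G ↑(A ∪ B) :=
    eqOn_of_sum_filter_le_eq fun p hp => by rw [hF, hG, h p hp]
  calc ∑ q ∈ A, f q • m q = ∑ q ∈ A ∪ B, F q • m q := by
        simp only [F, ite_smul, zero_smul]; rw [sum_ite_mem, union_inter_cancel_left]
    _ = ∑ q ∈ A ∪ B, G q • m q := sum_congr rfl fun q hq => by rw [hFG (mem_coe.mpr hq)]
    _ = ∑ q ∈ B, g q • m q := by
        simp only [G, ite_smul, zero_smul]; rw [sum_ite_mem, union_inter_cancel_right]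

end Finset

theorem sum_filter_le_eq_ite_of_mem_iff_sup {ι M : Type*} [SemilatticeSup ι] [OrderBot ι]
    [AddCommMonoidWithOne M] {S : Set ι} {FP : Finset ι}
    (hFP : ∀ σ, σ ∈ FP ↔ ∃ T : Finset ι, T.Nonempty ∧ ↑T ⊆ S ∧ σ = T.sup id)
    {μ : ι → M} (hμ : ∀ p ∈ FP, ∑ q ∈ FP with q ≤ p, μ q = 1) (p : ι) :
    ∑ q ∈ FP with q ≤ p, μ q = if ∃ b ∈ S, b ≤ p then 1 else 0 := by
  have hS : ∀ b ∈ S, b ∈ FP := fun b hb =>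
    (hFP b).mpr ⟨{b}, singleton_nonempty b, by simpa using hb, by simp⟩
  split_ifs with hex
  · obtain ⟨b₀, hb₀S, hb₀p⟩ := hex
    set T := FP.filter fun q => q ∈ S ∧ q ≤ p
    have hT : ∀ b ∈ S, b ≤ p → b ≤ T.sup id := fun b hb hbp =>
      le_sup (f := id) (mem_filter.mpr ⟨hS b hb, hb, hbp⟩)
    have hTp : T.sup id ≤ p := Finset.sup_le fun q hq => (mem_filter.mp hq).2.2
    have hTP : T.sup id ∈ FP :=
      (hFP _).mpr ⟨T, ⟨b₀, mem_filter.mpr ⟨hS b₀ hb₀S, hb₀S, hb₀p⟩⟩,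
        fun q hq => (mem_filter.mp hq).2.1, rfl⟩
    rw [← hμ _ hTP]
    refine sum_congr (filter_congr fun q hq => ⟨fun hqp => ?_, fun hqT => hqT.trans hTp⟩)
      fun _ _ => rfl
    obtain ⟨T', -, hT'S, rfl⟩ := (hFP q).mp hq
    exact Finset.sup_le fun b hb => hT b (hT'S hb) ((le_sup (f := id) hb).trans hqp)
  · refine sum_eq_zero fun q hq => ?_
    obtain ⟨hqP, hqp⟩ := mem_filter.mp hq
    obtain ⟨T, ⟨b, hb⟩, hTS, rfl⟩ := (hFP q).mp hqP
    exact absurd ⟨b, hTS hb, (le_sup (f := id) hb).trans hqp⟩ hex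

open List in
theorem List.exists_ofFn_eq {X : Type*} {n : ℕ} {l : List X} (h : l.length = n) :
    ∃ f : Fin n → X, ofFn f = l := by
  subst h; exact ⟨_, ofFn_getElem⟩

open List in
theorem List.forall₂_ofFn_iff {X Y : Type*} {R : X → Y → Prop} {n : ℕ} {f : Fin n → X}
    {g : Fin n → Y} : Forall₂ R (ofFn f) (ofFn g) ↔ ∀ i, R (f i) (g i) := by
  simp [forall₂_iff_get, Fin.forall_iff]

theorem List.sublistForall₂_cons_cons_iff {X Y : Type*} {R : X → Y → Prop} {a : X} {x : Y}
    {l₁ : List X} {l₂ : List Y} :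
    SublistForall₂ R (a :: l₁) (x :: l₂) ↔
      R a x ∧ SublistForall₂ R l₁ l₂ ∨ SublistForall₂ R (a :: l₁) l₂ := by
  constructor
  · rintro (_ | ⟨hax, h⟩ | ⟨h⟩)
    exacts [Or.inl ⟨hax, h⟩, Or.inr h]
  · rintro (⟨hax, h⟩ | h)
    exacts [.cons hax h, .cons_right h]

theorem posList_cons_of_ne_zero {a : ℕ} (ha : a ≠ 0) (l : List ℕ) :
    posList (a :: l) = a :: posList l := by
  simp [posList, ha]

theorem posList_eq_self {l : List ℕ} (hl : ∀ a ∈ l, 0 < a) : posList l = l :=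
  List.filter_eq_self.mpr fun a ha => by simpa using (hl a ha).ne'

theorem exists_forall₂_le_posList_eq_iff {α p : List ℕ} (hα : ∀ a ∈ α, 0 < a) :
    (∃ b, List.Forall₂ (· ≤ ·) b p ∧ posList b = α) ↔ List.SublistForall₂ (· ≤ ·) α p := by
  constructor
  · rintro ⟨b, hbp, rfl⟩
    clear hα
    induction hbp with
    | nil => exact .nil
    | @cons y x b p hyx _ ih =>
      by_cases hy : y = 0
      · simpa [posList, hy] using ih.cons_right
      · rw [posList_cons_of_ne_zero hy]; exact ih.cons hyx
  · intro h
    induction h with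
    | @nil p =>
      refine ⟨p.map fun _ => 0, ?_, by simp [posList]⟩
      exact List.forall₂_map_left_iff.mpr (List.forall₂_same.mpr fun _ _ => Nat.zero_le _)
    | @cons a x α p hax _ ih =>
      obtain ⟨b, hbp, hb⟩ := ih fun a' ha' => hα a' (List.mem_cons_of_mem a ha')
      exact ⟨a :: b, .cons hax hbp, by rw [posList_cons_of_ne_zero (hα a (by simp)).ne', hb]⟩
    | @cons_right x α p _ ih =>
      obtain ⟨b, hbp, hb⟩ := ih hα
      exact ⟨0 :: b, .cons (Nat.zero_le x) hbp, by simpa [posList] using hb⟩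

theorem exists_mem_Sset_le_iff {α : List ℕ} (hα : ∀ a ∈ α, 0 < a) {n : ℕ} (p : Fin n → ℕ) :
    (∃ b ∈ Sset α n, b ≤ p) ↔ List.SublistForall₂ (· ≤ ·) α (List.ofFn p) := by
  rw [← exists_forall₂_le_posList_eq_iff hα]
  constructor
  · rintro ⟨b, hb, hbp⟩
    exact ⟨List.ofFn b, List.forall₂_ofFn_iff.mpr hbp, hb⟩
  · rintro ⟨l, hlp, hl⟩
    obtain ⟨b, rfl⟩ := List.exists_ofFn_eq (by simpa using hlp.length_eq)
    exact ⟨b, hl, List.forall₂_ofFn_iff.mp hlp⟩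

open Sum

theorem BGlideMove.append_left {s t : List (ℕ ⊕ ℕ)} (w : List (ℕ ⊕ ℕ)) (h : BGlideMove s t) :
    BGlideMove (w ++ s) (w ++ t) := by
  cases h with
  | m1 u v p hp => simpa using BGlideMove.m1 (w ++ u) v p hp
  | m2 u v p hp => simpa using BGlideMove.m2 (w ++ u) v p hp

theorem BGlideMove.length_eq {s t : List (ℕ ⊕ ℕ)} (h : BGlideMove s t) :
    s.length = t.length := by
  cases h <;> simp

theorem BGlideMove.glideMove_unbar {s t : List (ℕ ⊕ ℕ)} (h : BGlideMove s t) :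
    GlideMove (unbar s) (unbar t) := by
  cases h with
  | m1 u v p hp => simpa [unbar] using GlideMove.m1 (unbar u) (unbar v) p hp
  | m2 u v p hp => simpa [unbar] using GlideMove.m2 (unbar u) (unbar v) p hp

theorem reflTransGen_bGlideMove_append_left {s t : List (ℕ ⊕ ℕ)} (w : List (ℕ ⊕ ℕ))
    (h : Relation.ReflTransGen BGlideMove s t) :
    Relation.ReflTransGen BGlideMove (w ++ s) (w ++ t) :=
  Relation.ReflTransGen.lift (w ++ ·) (fun _ _ => BGlideMove.append_left w) _ _ h

theorem length_eq_of_reflTransGen_bGlideMove {s t : List (ℕ ⊕ ℕ)}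
    (h : Relation.ReflTransGen BGlideMove s t) : s.length = t.length := by
  induction h with
  | refl => rfl
  | tail _ hst ih => exact ih.trans hst.length_eq

theorem unbar_cons (y : ℕ ⊕ ℕ) (s : List (ℕ ⊕ ℕ)) : unbar (y :: s) = y.elim id id :: unbar s :=
  rfl

theorem unbar_map_inl (l : List ℕ) : unbar (l.map inl) = l := by
  simp [unbar]

theorem reflTransGen_glideMove_unbar {s t : List (ℕ ⊕ ℕ)}
    (h : Relation.ReflTransGen BGlideMove s t) :
    Relation.ReflTransGen GlideMove (unbar s) (unbar t) :=
  Relation.ReflTransGen.lift unbar (fun _ _ => BGlideMove.glideMove_unbar) _ _ h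

/-- `BarPattern c α s` with `α = [a₁, …, aₖ]`: the nonzero letters of `s` read
`c̄* a₁ ā₁* ⋯ aₖ āₖ*`, where `c = none` allows no leading barred letter. -/
inductive BarPattern : Option ℕ → List ℕ → List (ℕ ⊕ ℕ) → Prop
  | nil (c) : BarPattern c [] []
  | zero {c α s} : BarPattern c α s → BarPattern c α (inl 0 :: s)
  | bar {c α s} : BarPattern (some c) α s → BarPattern (some c) α (inr c :: s)
  | leader {c a α s} (ha : 0 < a) : BarPattern (some a) α s → BarPattern c (a :: α) (inl a :: s)

namespace BarPattern

theorem nil_iff {c : Option ℕ} {α : List ℕ} : BarPattern c α [] ↔ α = [] := by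
  constructor
  · rintro ⟨⟩; rfl
  · rintro rfl; exact .nil c

theorem cons_iff {c : Option ℕ} {α : List ℕ} {y : ℕ ⊕ ℕ} {s : List (ℕ ⊕ ℕ)} :
    BarPattern c α (y :: s) ↔ y = inl 0 ∧ BarPattern c α s ∨
      (∃ c₀, c = some c₀ ∧ y = inr c₀ ∧ BarPattern c α s) ∨
      ∃ a α', α = a :: α' ∧ 0 < a ∧ y = inl a ∧ BarPattern (some a) α' s := by
  constructor
  · rintro (_ | h | h | ⟨ha, h⟩)
    exacts [Or.inl ⟨rfl, h⟩, Or.inr (Or.inl ⟨_, rfl, rfl, h⟩),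
      Or.inr (Or.inr ⟨_, _, rfl, ha, rfl, h⟩)]
  · rintro (⟨rfl, h⟩ | ⟨c₀, rfl, rfl, h⟩ | ⟨a, α', rfl, ha, rfl, h⟩)
    exacts [h.zero, h.bar, h.leader ha]

theorem map_inl (b : List ℕ) (c : Option ℕ) : BarPattern c (posList b) (b.map inl) := by
  induction b generalizing c with
  | nil => exact .nil c
  | cons y b ih =>
    by_cases hy : y = 0
    · simpa [posList, hy] using (ih c).zero
    · rw [posList_cons_of_ne_zero hy]
      exact .leader (Nat.pos_of_ne_zero hy) (ih (some y))

theorem glide_head {c : Option ℕ} {α : List ℕ} {p : ℕ} {v : List (ℕ ⊕ ℕ)} (hp : 0 < p)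
    (h : BarPattern c α (inl 0 :: inl p :: v)) :
    BarPattern c α (inl p :: inl 0 :: v) ∧ BarPattern c α (inl p :: inr p :: v) := by
  rcases h with _ | h | _ | ⟨ha, _⟩
  · rcases h with _ | ⟨h⟩ | _ | ⟨ha, h⟩
    · omega
    · exact ⟨.leader ha h.zero, .leader ha h.bar⟩
  · omega

theorem append_left {s t : List (ℕ ⊕ ℕ)}
    (hst : ∀ c α, BarPattern c α s → BarPattern c α t) (u : List (ℕ ⊕ ℕ)) {c α}
    (h : BarPattern c α (u ++ s)) : BarPattern c α (u ++ t) := by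
  induction u generalizing c α with
  | nil => exact hst c α h
  | cons y u ih =>
    rcases h with _ | h | h | ⟨ha, h⟩
    exacts [(ih h).zero, (ih h).bar, .leader ha (ih h)]

theorem of_bGlideMove {s t : List (ℕ ⊕ ℕ)} (hst : BGlideMove s t) {c α}
    (h : BarPattern c α s) : BarPattern c α t := by
  cases hst with
  | m1 u v p hp => exact append_left (fun _ _ h => (glide_head hp h).1) u h
  | m2 u v p hp => exact append_left (fun _ _ h => (glide_head hp h).2) u h

theorem of_reflTransGen {s t : List (ℕ ⊕ ℕ)} (hst : Relation.ReflTransGen BGlideMove s t)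
    {c α} (h : BarPattern c α s) : BarPattern c α t := by
  induction hst with
  | refl => exact h
  | tail _ hstep ih => exact of_bGlideMove hstep ih

/-- A pending leader `c` first sits where the trail of zeros and `c̄`s behind it ends and then
glides left through that trail, one (M.1) or (M.2) move per letter. -/
theorem exists_reflTransGen {c : Option ℕ} {α : List ℕ} {s : List (ℕ ⊕ ℕ)}
    (h : BarPattern c α s) (hc : ∀ a ∈ c, 0 < a) :
    ∃ b, posList b = c.toList ++ α ∧
      Relation.ReflTransGen BGlideMove (b.map inl) (c.toList.map inl ++ s) := by
  induction h with
  | nil c =>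
    exact ⟨c.toList, by simpa using posList_eq_self (by simpa using hc), by simp; rfl⟩
  | @zero c α s _ ih =>
    obtain ⟨b, hb, hr⟩ := ih hc
    refine ⟨0 :: b, by simpa [posList] using hb, ?_⟩
    refine (reflTransGen_bGlideMove_append_left [inl 0] hr).trans ?_
    rcases c with _ | a
    · exact .refl
    · exact .single (BGlideMove.m1 [] s a (hc a rfl))
  | @bar c α s _ ih =>
    obtain ⟨b, hb, hr⟩ := ih hc
    exact ⟨0 :: b, by simpa [posList] using hb,
      (reflTransGen_bGlideMove_append_left [inl 0] hr).tail (BGlideMove.m2 [] s c (hc c rfl))⟩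
  | @leader c a α s ha _ ih =>
    obtain ⟨b, hb, hr⟩ := ih (by simpa using ha)
    refine ⟨c.toList ++ b, ?_,
      by simpa using reflTransGen_bGlideMove_append_left (c.toList.map inl) hr⟩
    rw [posList, List.filter_append, ← posList, ← posList, hb, posList_eq_self (by simpa using hc)]
    rfl

end BarPattern

theorem mem_CtildeSet_iff {α : List ℕ} {n : ℕ} {s : List (ℕ ⊕ ℕ)} :
    s ∈ CtildeSet α n ↔ BarPattern none α s ∧ s.length = n := by
  constructor
  · rintro ⟨b, hb, hr⟩
    refine ⟨(hb ▸ BarPattern.map_inl _ none).of_reflTransGen hr, ?_⟩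
    simpa using (length_eq_of_reflTransGen_bGlideMove hr).symm
  · rintro ⟨hs, rfl⟩
    obtain ⟨l, hl, hr⟩ := hs.exists_reflTransGen (by simp)
    obtain ⟨b, rfl⟩ := List.exists_ofFn_eq (l := l)
      (by simpa using length_eq_of_reflTransGen_bGlideMove hr)
    exact ⟨b, by simpa [Sset] using hl, by simpa using hr⟩

def barPatternsBelow : Option ℕ → List ℕ → List ℕ → Finset (List (ℕ ⊕ ℕ))
  | _, α, [] => if α = [] then {[]} else ∅
  | c, α, x :: p =>
      (barPatternsBelow c α p).image (List.cons (inl 0)) ∪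
      (match c with
        | some c₀ => if c₀ ≤ x then (barPatternsBelow c α p).image (List.cons (inr c₀)) else ∅
        | none => ∅) ∪
      (match α with
        | a :: α' =>
          if 0 < a ∧ a ≤ x then (barPatternsBelow (some a) α' p).image (List.cons (inl a)) else ∅
        | [] => ∅)

theorem mem_barPatternsBelow {c : Option ℕ} {α p : List ℕ} {s : List (ℕ ⊕ ℕ)} :
    s ∈ barPatternsBelow c α p ↔ BarPattern c α s ∧ List.Forall₂ (· ≤ ·) (unbar s) p := by
  induction p generalizing c α s with
  | nil =>
    cases s <;> by_cases hα : α = [] <;> simp [barPatternsBelow, hα, BarPattern.nil_iff, unbar]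
  | cons x p ih =>
    rcases s with _ | ⟨y, t⟩
    · rcases c with _ | c₀ <;> rcases α with _ | ⟨a, α⟩ <;>
        simp [barPatternsBelow, unbar] <;> split_ifs <;> simp
    rcases c with _ | c₀ <;> rcases α with _ | ⟨a, α⟩ <;>
      simp [barPatternsBelow, BarPattern.cons_iff, ih, unbar_cons] <;> (try split_ifs) <;>
      aesop (add safe (by omega))

noncomputable def embedInd (α p : List ℕ) : ℤ :=
  if List.SublistForall₂ (· ≤ ·) α p then 1 else 0

theorem embedInd_nil_left (p : List ℕ) : embedInd [] p = 1 := if_pos .nil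

theorem embedInd_cons_nil (a : ℕ) (α : List ℕ) : embedInd (a :: α) [] = 0 :=
  if_neg (by rintro ⟨⟩)

theorem embedInd_cons_cons (a x : ℕ) (α p : List ℕ) :
    embedInd (a :: α) (x :: p) =
      embedInd (a :: α) p + if a ≤ x then embedInd α p - embedInd (a :: α) p else 0 := by
  have hmono : List.SublistForall₂ (· ≤ ·) (a :: α) p → List.SublistForall₂ (· ≤ ·) α p :=
    _root_.trans (List.tail_sublistForall₂_self (a :: α))
  simp only [embedInd, List.sublistForall₂_cons_cons_iff]
  split_ifs <;> simp_all

theorem barredCount_cons_inl (a : ℕ) (s : List (ℕ ⊕ ℕ)) :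
    barredCount (inl a :: s) = barredCount s := by
  simp [barredCount]

theorem barredCount_cons_inr (a : ℕ) (s : List (ℕ ⊕ ℕ)) :
    barredCount (inr a :: s) = barredCount s + 1 := by
  simp [barredCount, List.filter_cons]

theorem disjoint_image_cons {X : Type*} [DecidableEq X] {y z : X} (h : y ≠ z)
    (S T : Finset (List X)) : Disjoint (S.image (List.cons y)) (T.image (List.cons z)) := by
  simp [Finset.disjoint_left, h.symm]

-- Peeling off the first letter: a `0` keeps the count, an admissible `c̄₀` negates it, and a
-- leader `a` passes to state `some a`; `embedInd_cons_cons` is the matching recursion.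
theorem sum_barPatternsBelow {c : Option ℕ} {α : List ℕ} (hα : ∀ a ∈ α, 0 < a) (p : List ℕ) :
    ∑ s ∈ barPatternsBelow c α p, (-1 : ℤ) ^ barredCount s =
      embedInd α p - c.elim 0 fun c₀ => embedInd (c₀ :: α) p := by
  induction p generalizing c α with
  | nil =>
    rcases c with _ | c₀ <;> rcases α with _ | ⟨a, α⟩ <;>
      simp [barPatternsBelow, barredCount, embedInd_nil_left, embedInd_cons_nil]
  | cons x p ih =>
    rcases α with _ | ⟨a, α⟩
    · rcases c with _ | c₀ <;> simp only [barPatternsBelow] <;> (try split_ifs) <;>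
        simp [Finset.sum_union, disjoint_image_cons, barredCount_cons_inl, barredCount_cons_inr,
          pow_succ, ih hα, embedInd_nil_left, embedInd_cons_cons, *]
    · obtain ⟨ha, hα'⟩ := List.forall_mem_cons.mp hα
      rcases c with _ | c₀ <;> simp only [barPatternsBelow, ha, true_and] <;> (try split_ifs) <;>
        simp [Finset.sum_union, disjoint_image_cons, barredCount_cons_inl, barredCount_cons_inr,
          pow_succ, ih hα, ih hα', embedInd_cons_cons, ha.ne, *]
      ring

theorem sum_filter_le_sum_sign_eq_ite {α : List ℕ} (hα : ∀ a ∈ α, 0 < a) {n : ℕ}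
    {FC : Finset (Fin n → ℕ)} (hFC : (↑FC : Set (Fin n → ℕ)) = Cset α n)
    {G : (Fin n → ℕ) → Finset (List (ℕ ⊕ ℕ))}
    (hG : ∀ σ ∈ FC, (↑(G σ) : Set (List (ℕ ⊕ ℕ)))
        = {s | s ∈ CtildeSet α n ∧ unbar s = List.ofFn σ}) (p : Fin n → ℕ) :
    ∑ q ∈ FC with q ≤ p, ∑ s ∈ G q, (-1 : ℤ) ^ barredCount s =
      if ∃ b ∈ Sset α n, b ≤ p then 1 else 0 := by
  have hmemG : ∀ σ ∈ FC, ∀ s, s ∈ G σ ↔ s ∈ CtildeSet α n ∧ unbar s = List.ofFn σ :=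
    fun σ hσ s => by rw [← Finset.mem_coe, hG σ hσ]; rfl
  have hdisj : Set.PairwiseDisjoint ↑(FC.filter (· ≤ p)) G := by
    intro q hq q' hq' hne
    refine Finset.disjoint_left.mpr fun s hs hs' => hne (List.ofFn_injective ?_)
    rw [← ((hmemG q (Finset.mem_filter.mp hq).1 s).mp hs).2,
      ← ((hmemG q' (Finset.mem_filter.mp hq').1 s).mp hs').2]
  have hunion : (FC.filter (· ≤ p)).biUnion G = barPatternsBelow none α (List.ofFn p) := by
    ext s
    simp only [Finset.mem_biUnion, Finset.mem_filter, mem_barPatternsBelow]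
    constructor
    · rintro ⟨q, ⟨hq, hqp⟩, hs⟩
      obtain ⟨hsC, hsq⟩ := (hmemG q hq s).mp hs
      exact ⟨(mem_CtildeSet_iff.mp hsC).1, hsq ▸ List.forall₂_ofFn_iff.mpr hqp⟩
    · rintro ⟨hpat, hle⟩
      obtain ⟨q, hq⟩ := List.exists_ofFn_eq (by simpa using hle.length_eq)
      have hsC : s ∈ CtildeSet α n :=
        mem_CtildeSet_iff.mpr ⟨hpat, by simpa [unbar] using hle.length_eq⟩
      have hqC : q ∈ FC := by
        rw [← Finset.mem_coe, hFC]
        obtain ⟨b, hb, hr⟩ := hsC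
        have hr' := reflTransGen_glideMove_unbar hr
        rw [unbar_map_inl, ← hq] at hr'
        exact ⟨b, hb, hr'⟩
      exact ⟨q, ⟨hqC, List.forall₂_ofFn_iff.mp (hq ▸ hle)⟩, (hmemG q hqC s).mpr ⟨hsC, hq.symm⟩⟩
  rw [← Finset.sum_biUnion hdisj, hunion, sum_barPatternsBelow hα, exists_mem_Sset_le_iff hα]
  simp [embedInd]

theorem stmt_10_general (α : List ℕ) (hα : ∀ a ∈ α, 0 < a) (n : ℕ)
    (FP : Finset (Fin n → ℕ)) (hFP : (↑FP : Set (Fin n → ℕ)) = Pset α n)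
    (μ : (Fin n → ℕ) → ℤ)
    (hμ : ∀ p ∈ FP, ∑ q ∈ FP.filter (fun q => q ≤ p), μ q = 1)
    (FC : Finset (Fin n → ℕ)) (hFC : (↑FC : Set (Fin n → ℕ)) = Cset α n)
    (G : (Fin n → ℕ) → Finset (List (ℕ ⊕ ℕ)))
    (hG : ∀ σ ∈ FC, (↑(G σ) : Set (List (ℕ ⊕ ℕ)))
        = {s | s ∈ CtildeSet α n ∧ unbar s = List.ofFn σ}) :
    ∑ σ ∈ FC, (∑ s ∈ G σ, (-1 : ℤ) ^ barredCount s) •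
        ∏ i : Fin n, (X i : MvPolynomial (Fin n) ℤ) ^ σ i
      = ∑ σ ∈ FP, μ σ • ∏ i : Fin n, (X i : MvPolynomial (Fin n) ℤ) ^ σ i := by
  refine Finset.sum_smul_eq_of_sum_filter_le_eq _ fun p _ => ?_
  have hFP' : ∀ σ, σ ∈ FP ↔
      ∃ T : Finset (Fin n → ℕ), T.Nonempty ∧ ↑T ⊆ Sset α n ∧ σ = T.sup id :=
    fun σ => by rw [← Finset.mem_coe, hFP]; rfl
  rw [sum_filter_le_sum_sign_eq_ite hα hFC hG p, sum_filter_le_eq_ite_of_mem_iff_sup hFP' hμ p]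

/-- The signed generating function over `C̃_α` equals the Möbius-weighted sum over
`P_α`: `∑_{σ ∈ C_α} μ'_{C_α}(σ) y^σ = ∑_{σ ∈ P_α} μ_{P_α}(σ) y^σ`, where
`μ'_{C_α}(σ) = ∑_{σ̃ ∈ π⁻¹(σ)} (-1)^{barred(σ̃)}`. -/
theorem stmt_10 (α : List ℕ) (hα : ∀ a ∈ α, 0 < a) (n : ℕ) (hn : α.length ≤ n)
    (FP : Finset (Fin n → ℕ)) (hFP : (↑FP : Set (Fin n → ℕ)) = Pset α n)
    (μ : (Fin n → ℕ) → ℤ)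
    (hμ : ∀ p ∈ FP, ∑ q ∈ FP.filter (fun q => q ≤ p), μ q = 1)
    (FC : Finset (Fin n → ℕ)) (hFC : (↑FC : Set (Fin n → ℕ)) = Cset α n)
    (G : (Fin n → ℕ) → Finset (List (ℕ ⊕ ℕ)))
    (hG : ∀ σ ∈ FC, (↑(G σ) : Set (List (ℕ ⊕ ℕ)))
        = {s | s ∈ CtildeSet α n ∧ unbar s = List.ofFn σ}) :
    ∑ σ ∈ FC, (∑ s ∈ G σ, (-1 : ℤ) ^ barredCount s) •
        ∏ i : Fin n, (X i : MvPolynomial (Fin n) ℤ) ^ σ i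
      = ∑ σ ∈ FP, μ σ • ∏ i : Fin n, (X i : MvPolynomial (Fin n) ℤ) ^ σ i :=
  stmt_10_general α hα n FP hFP μ hμ FC hFC G hG
end

section
/- The overlapping shuffle product of compositions is commutative and associative: for all compositions α, β, γ, one has α ⧢_o β = β ⧢_o α and (α ⧢_o β) ⧢_o γ = α ⧢_o (β ⧢_o γ) as formal ℤ-linear combinations of compositions. -/
open MvPolynomial Finset
open scoped Classical

/-- An overlapping shuffle of `(m,n)`: a surjection `τ : [m+n] → [k]` that is
strictly increasing on the first `m` elements and on the last `n` elements. -/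
def IsOverlappingShuffle (m n : ℕ) {k : ℕ} (τ : Fin (m + n) → Fin k) : Prop :=
  Function.Surjective τ ∧
    (∀ i j : Fin (m + n), (i : ℕ) < (j : ℕ) → (j : ℕ) < m → τ i < τ j) ∧
    (∀ i j : Fin (m + n), m ≤ (i : ℕ) → (i : ℕ) < (j : ℕ) → τ i < τ j)

/-- The composition `γ^τ` with `γ^τ_i = ∑_{τ(j)=i} (α⌢β)_j`. -/
def gammaComp (α β : List ℕ) {k : ℕ} (τ : Fin (α.length + β.length) → Fin k) : List ℕ :=
  List.ofFn (fun i : Fin k =>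
    ∑ j : Fin (α.length + β.length), if τ j = i then (α ++ β).getD (j : ℕ) 0 else 0)

/-- `c_{α,β}^γ`: the number of overlapping shuffles `τ` of `(ℓ(α), ℓ(β))` with
`γ^τ = γ`. -/
noncomputable def shuffleCoeff (α β γ : List ℕ) : ℕ :=
  Nat.card {τ : Fin (α.length + β.length) → Fin γ.length //
    IsOverlappingShuffle α.length β.length τ ∧ gammaComp α β τ = γ}

/-- The truncated monomial quasisymmetric function
`M_{N,α} = ∑_{i_1 < ⋯ < i_k ≤ N} x_{i_1}^{α_1} ⋯ x_{i_k}^{α_k}`. -/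
noncomputable def Mqs (N : ℕ) (α : List ℕ) : MvPolynomial (Fin N) ℤ :=
  ∑ j ∈ Finset.univ.filter (fun j : Fin α.length → Fin N => StrictMono j),
    ∏ t : Fin α.length, X (j t) ^ α.get t

/-!
Write `γ^τ` as the pushforward of the weights `(α ⌢ β)_j` along `τ`; pushforwards compose.
Commutativity: precomposing with the block swap `Fin (n + m) ≃ Fin (m + n)` turns shuffles of
`(α, β)` into shuffles of `(β, α)` with the same `γ^τ`.
Associativity: a shuffle `τ` of `(α, β)` followed by a shuffle `ρ` of `(γ^τ, γ)` composes to a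
surjection `σ = ρ ∘ (τ ⊔ id)` of the three concatenated blocks that is strictly increasing on each
block, and `σ` determines the pair: `τ` is `σ` on the first two blocks followed by the ranking of
their image, and `ρ` is that ranking glued to `σ` on the last block. So `(α ⧢_o β) ⧢_o γ` counts
these triple shuffles of `(α, β, γ)`, while by commutativity `α ⧢_o (β ⧢_o γ)` counts those of
`(β, γ, α)`; rotating the blocks identifies the two counts.
-/

open Function

section Pushforward

variable {M : Type*} [AddCommMonoid M] {ι κ : Type*} [Fintype ι] [Fintype κ] {k K : ℕ}

def pushforward (w : ι → M) (τ : ι → Fin k) : List M :=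
  List.ofFn fun i : Fin k => ∑ j, if τ j = i then w j else 0

@[simp]
lemma length_pushforward (w : ι → M) (τ : ι → Fin k) : (pushforward w τ).length = k :=
  List.length_ofFn

lemma getD_pushforward (w : ι → M) (τ : ι → Fin k) (x : Fin k) :
    (pushforward w τ).getD x 0 = ∑ j, if τ j = x then w j else 0 := by
  simp [pushforward]

lemma pushforward_comp_equiv (e : κ ≃ ι) (w : ι → M) (τ : ι → Fin k) :
    pushforward (w ∘ e) (τ ∘ e) = pushforward w τ := by
  unfold pushforward
  congr 1
  funext i
  exact e.sum_comp fun j => if τ j = i then w j else 0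

lemma pushforward_pushforward (w : ι → M) (f : ι → Fin k) (g : Fin k → Fin K) :
    pushforward (fun x : Fin k => (pushforward w f).getD x 0) g = pushforward w (g ∘ f) := by
  simp_rw [getD_pushforward]
  unfold pushforward
  congr 1
  funext i
  calc ∑ x, (if g x = i then ∑ j, if f j = x then w j else 0 else 0)
      = ∑ x, ∑ j, if f j = x then (if g x = i then w j else 0) else 0 := by
        refine sum_congr rfl fun x _ => ?_
        split_ifs <;> simp
    _ = ∑ j, if g (f j) = i then w j else 0 := by
        rw [sum_comm]
        simp

end Pushforward

lemma gammaComp_eq_pushforward (α β : List ℕ) {k : ℕ} (τ : Fin (α.length + β.length) → Fin k) :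
    gammaComp α β τ = pushforward (fun j : Fin (α.length + β.length) => (α ++ β).getD j 0) τ := rfl

section MapHead

variable {m k K p : ℕ}

def mapHead (τ : Fin m → Fin k) (p : ℕ) : Fin (m + p) → Fin (k + p) :=
  Fin.addCases (fun i => Fin.castAdd p (τ i)) (Fin.natAdd k)

@[simp]
lemma mapHead_castAdd (τ : Fin m → Fin k) (i : Fin m) :
    mapHead τ p (Fin.castAdd p i) = Fin.castAdd p (τ i) := by
  simp [mapHead]

@[simp]
lemma mapHead_natAdd (τ : Fin m → Fin k) (i : Fin p) :
    mapHead τ p (Fin.natAdd m i) = Fin.natAdd k i := by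
  simp [mapHead]

lemma pushforward_mapHead {M : Type*} [AddCommMonoid M] (l γ : List M) (hl : l.length = m)
    (τ : Fin m → Fin k) :
    pushforward (fun j : Fin (m + γ.length) => (l ++ γ).getD j 0) (mapHead τ γ.length)
      = pushforward (fun j : Fin m => l.getD j 0) τ ++ γ := by
  unfold pushforward
  rw [List.ofFn_add]
  congr 1
  · congr 1
    funext x
    have hne : ∀ z : Fin γ.length, k + (z : ℕ) ≠ x := fun z => by omega
    rw [Fin.sum_univ_add]
    simp only [mapHead_castAdd, mapHead_natAdd, Fin.ext_iff,
      Fin.val_castAdd, Fin.val_natAdd, Fin.val_castLE, hne, if_false, sum_const_zero,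
      add_zero]
    exact sum_congr rfl fun j _ => by rw [List.getD_append _ _ _ _ (hl ▸ j.2)]
  · conv_rhs => rw [← List.ofFn_getElem (xs := γ)]
    congr 1
    funext x
    have hne : ∀ j : Fin m, (τ j : ℕ) ≠ k + x := fun j => by omega
    rw [Fin.sum_univ_add]
    simp only [mapHead_castAdd, mapHead_natAdd, Fin.ext_iff,
      Fin.val_castAdd, Fin.val_natAdd, hne, if_false, sum_const_zero, zero_add,
      Nat.add_left_cancel_iff]
    simp [← Fin.ext_iff, hl]

end MapHead

lemma isOverlappingShuffle_iff {m n k : ℕ} {τ : Fin (m + n) → Fin k} :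
    IsOverlappingShuffle m n τ ↔
      Surjective τ ∧ StrictMono (τ ∘ Fin.castAdd n) ∧ StrictMono (τ ∘ Fin.natAdd m) := by
  refine ⟨fun ⟨hs, h₁, h₂⟩ => ⟨hs, fun a b hab => h₁ _ _ hab (by simp), fun a b hab => ?_⟩,
    fun ⟨hs, h₁, h₂⟩ => ⟨hs, fun i j hij hj => ?_, fun i j hi hij => ?_⟩⟩
  · exact h₂ _ _ (by simp) (by simpa using hab)
  · have := @h₁ ⟨i, by omega⟩ ⟨j, hj⟩ hij
    simpa [Fin.castAdd] using this
  · have := @h₂ ⟨i - m, by omega⟩ ⟨j - m, by omega⟩ (by simp only [Fin.mk_lt_mk]; omega)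
    simpa [Fin.natAdd, Fin.ext_iff, show m + (i - m) = i by omega,
      show m + (j - m) = j by omega] using this

lemma isOverlappingShuffle_comp_finAddFlip {m n k : ℕ} {τ : Fin (m + n) → Fin k}
    (hτ : IsOverlappingShuffle m n τ) : IsOverlappingShuffle n m (τ ∘ finAddFlip) := by
  obtain ⟨hs, h₁, h₂⟩ := isOverlappingShuffle_iff.mp hτ
  refine isOverlappingShuffle_iff.mpr ⟨hs.comp finAddFlip.surjective, ?_, ?_⟩
  · convert h₂ using 1; funext i; simp
  · convert h₁ using 1; funext i; simp

lemma gammaComp_comp_finAddFlip (α β : List ℕ) {k : ℕ} (τ : Fin (α.length + β.length) → Fin k) :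
    gammaComp β α (τ ∘ finAddFlip) = gammaComp α β τ := by
  rw [gammaComp_eq_pushforward, gammaComp_eq_pushforward,
    ← pushforward_comp_equiv (finAddFlip : Fin (β.length + α.length) ≃ _) _ τ]
  congr 1
  funext j
  induction j using Fin.addCases <;> simp [List.getElem?_append_left]

lemma shuffleCoeff_le_shuffleCoeff_swap (α β δ : List ℕ) :
    shuffleCoeff α β δ ≤ shuffleCoeff β α δ :=
  Nat.card_le_card_of_injective
    (fun τ => ⟨τ.1 ∘ finAddFlip, isOverlappingShuffle_comp_finAddFlip τ.2.1,
      (gammaComp_comp_finAddFlip α β τ.1).trans τ.2.2⟩)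
    fun _ _ h => Subtype.ext (finAddFlip.surjective.injective_comp_right (congrArg Subtype.val h))

lemma shuffleCoeff_comm (α β δ : List ℕ) : shuffleCoeff α β δ = shuffleCoeff β α δ :=
  (shuffleCoeff_le_shuffleCoeff_swap α β δ).antisymm (shuffleCoeff_le_shuffleCoeff_swap β α δ)

def IsTripleShuffle (m n p : ℕ) {K : ℕ} (σ : Fin (m + n + p) → Fin K) : Prop :=
  Surjective σ ∧ StrictMono (σ ∘ Fin.castAdd p ∘ Fin.castAdd n) ∧
    StrictMono (σ ∘ Fin.castAdd p ∘ Fin.natAdd m) ∧ StrictMono (σ ∘ Fin.natAdd (m + n))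

abbrev TripleShuffleSet (α β γ δ : List ℕ) : Type :=
  {σ : Fin (α.length + β.length + γ.length) → Fin δ.length //
    IsTripleShuffle α.length β.length γ.length σ ∧
      pushforward (fun j : Fin (α.length + β.length + γ.length) => (α ++ β ++ γ).getD j 0) σ = δ}

noncomputable def tripleCoeff (α β γ δ : List ℕ) : ℕ :=
  Nat.card (TripleShuffleSet α β γ δ)

def blockRotate (m n p : ℕ) : Fin (n + p + m) ≃ Fin (m + n + p) :=
  finAddFlip.trans (finCongr (add_assoc m n p).symm)

section BlockRotate

variable {m n p : ℕ}

@[simp]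
lemma blockRotate_castAdd_castAdd (i : Fin n) :
    blockRotate m n p (Fin.castAdd m (Fin.castAdd p i)) = Fin.castAdd p (Fin.natAdd m i) := by
  ext; simp [blockRotate]

@[simp]
lemma blockRotate_castAdd_natAdd (i : Fin p) :
    blockRotate m n p (Fin.castAdd m (Fin.natAdd n i)) = Fin.natAdd (m + n) i := by
  ext; simp [blockRotate, add_assoc]

@[simp]
lemma blockRotate_natAdd (i : Fin m) :
    blockRotate m n p (Fin.natAdd (n + p) i) = Fin.castAdd p (Fin.castAdd n i) := by
  ext; simp [blockRotate]

lemma isTripleShuffle_comp_blockRotate {K : ℕ} {σ : Fin (m + n + p) → Fin K}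
    (hσ : IsTripleShuffle m n p σ) : IsTripleShuffle n p m (σ ∘ blockRotate m n p) := by
  obtain ⟨hs, h₁, h₂, h₃⟩ := hσ
  refine ⟨hs.comp (blockRotate m n p).surjective, ?_, ?_, ?_⟩
  · convert h₂ using 1; funext i; simp
  · convert h₃ using 1; funext i; simp
  · convert h₁ using 1; funext i; simp

end BlockRotate

lemma pushforward_comp_blockRotate (α β γ : List ℕ) {K : ℕ}
    (σ : Fin (α.length + β.length + γ.length) → Fin K) :
    pushforward (fun j : Fin (β.length + γ.length + α.length) => (β ++ γ ++ α).getD j 0)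
      (σ ∘ blockRotate _ _ _)
      = pushforward (fun j : Fin (α.length + β.length + γ.length) => (α ++ β ++ γ).getD j 0) σ := by
  rw [← pushforward_comp_equiv (blockRotate _ _ _) _ σ]
  congr 1
  funext j
  induction j using Fin.addCases with
  | left j =>
    induction j using Fin.addCases <;>
      simp [List.getElem?_append_left, List.getElem?_append_right, add_assoc]
  | right j => simp [List.getElem?_append_left, add_assoc]

lemma tripleCoeff_le_tripleCoeff_rotate (α β γ δ : List ℕ) :
    tripleCoeff α β γ δ ≤ tripleCoeff β γ α δ :=
  Nat.card_le_card_of_injective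
    (fun σ => ⟨σ.1 ∘ blockRotate _ _ _, isTripleShuffle_comp_blockRotate σ.2.1,
      (pushforward_comp_blockRotate α β γ σ.1).trans σ.2.2⟩)
    fun _ _ h =>
      Subtype.ext ((blockRotate _ _ _).surjective.injective_comp_right (congrArg Subtype.val h))

lemma tripleCoeff_rotate (α β γ δ : List ℕ) : tripleCoeff α β γ δ = tripleCoeff β γ α δ :=
  (tripleCoeff_le_tripleCoeff_rotate α β γ δ).antisymm
    ((tripleCoeff_le_tripleCoeff_rotate β γ α δ).trans (tripleCoeff_le_tripleCoeff_rotate γ α β δ))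

section HeadFactorization

variable {m p k K : ℕ}

def headImage (σ : Fin (m + p) → Fin K) : Finset (Fin K) :=
  univ.image (σ ∘ Fin.castAdd p)

lemma mem_headImage (σ : Fin (m + p) → Fin K) (j : Fin m) :
    σ (Fin.castAdd p j) ∈ headImage σ :=
  mem_image_of_mem _ (mem_univ j)

noncomputable def headRank (σ : Fin (m + p) → Fin K) (hk : (headImage σ).card = k) :
    Fin m → Fin k :=
  fun j => ((headImage σ).orderIsoOfFin hk).symm ⟨σ (Fin.castAdd p j), mem_headImage σ j⟩

noncomputable def headExt (σ : Fin (m + p) → Fin K) (hk : (headImage σ).card = k) :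
    Fin (k + p) → Fin K :=
  Fin.addCases ((headImage σ).orderEmbOfFin hk) (σ ∘ Fin.natAdd m)

variable {σ : Fin (m + p) → Fin K} {hk : (headImage σ).card = k}

lemma orderEmbOfFin_headRank (j : Fin m) :
    (headImage σ).orderEmbOfFin hk (headRank σ hk j) = σ (Fin.castAdd p j) := by
  rw [← coe_orderIsoOfFin_apply, headRank, OrderIso.apply_symm_apply]

lemma headRank_surjective : Surjective (headRank σ hk) := by
  intro x
  obtain ⟨j, -, hj⟩ := mem_image.mp ((headImage σ).orderEmbOfFin_mem hk x)
  exact ⟨j, ((headImage σ).orderEmbOfFin hk).injective (by rw [orderEmbOfFin_headRank, ← hj]; rfl)⟩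

lemma strictMono_headRank_comp {ι : Type*} [Preorder ι] {e : ι → Fin m}
    (he : StrictMono (σ ∘ Fin.castAdd p ∘ e)) : StrictMono (headRank σ hk ∘ e) := by
  intro a b hab
  rw [comp_apply, comp_apply, ← ((headImage σ).orderEmbOfFin hk).lt_iff_lt,
    orderEmbOfFin_headRank, orderEmbOfFin_headRank]
  exact he hab

@[simp]
lemma headExt_castAdd (x : Fin k) :
    headExt σ hk (Fin.castAdd p x) = (headImage σ).orderEmbOfFin hk x := by
  simp [headExt]

@[simp]
lemma headExt_natAdd (z : Fin p) : headExt σ hk (Fin.natAdd k z) = σ (Fin.natAdd m z) := by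
  simp [headExt]

lemma headExt_comp_mapHead_headRank : headExt σ hk ∘ mapHead (headRank σ hk) p = σ := by
  funext j
  induction j using Fin.addCases <;> simp [orderEmbOfFin_headRank]

end HeadFactorization

section MapHeadFactorization

variable {m p k K : ℕ} {τ : Fin m → Fin k} {ρ : Fin (k + p) → Fin K}

lemma headImage_comp_mapHead (hτ : Surjective τ) :
    headImage (ρ ∘ mapHead τ p) = univ.image (ρ ∘ Fin.castAdd p) := by
  have : (ρ ∘ mapHead τ p) ∘ Fin.castAdd p = (ρ ∘ Fin.castAdd p) ∘ τ := by
    funext j; simp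
  rw [headImage, this, ← image_image, image_univ_of_surjective hτ]

lemma card_headImage_comp_mapHead (hτ : Surjective τ) (hρ : StrictMono (ρ ∘ Fin.castAdd p)) :
    (headImage (ρ ∘ mapHead τ p)).card = k := by
  rw [headImage_comp_mapHead hτ, card_image_of_injective _ hρ.injective,
    card_univ, Fintype.card_fin]

lemma orderEmbOfFin_headImage_comp_mapHead (hτ : Surjective τ)
    (hρ : StrictMono (ρ ∘ Fin.castAdd p)) (hk : (headImage (ρ ∘ mapHead τ p)).card = k) :
    ⇑((headImage (ρ ∘ mapHead τ p)).orderEmbOfFin hk) = ρ ∘ Fin.castAdd p :=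
  (orderEmbOfFin_unique hk
    (fun x => headImage_comp_mapHead hτ ▸ mem_image_of_mem _ (mem_univ x)) hρ).symm

lemma headRank_comp_mapHead (hτ : Surjective τ) (hρ : StrictMono (ρ ∘ Fin.castAdd p))
    (hk : (headImage (ρ ∘ mapHead τ p)).card = k) : headRank (ρ ∘ mapHead τ p) hk = τ := by
  funext j
  apply ((headImage (ρ ∘ mapHead τ p)).orderEmbOfFin hk).injective
  rw [orderEmbOfFin_headRank, orderEmbOfFin_headImage_comp_mapHead hτ hρ]
  simp

lemma headExt_comp_mapHead (hτ : Surjective τ) (hρ : StrictMono (ρ ∘ Fin.castAdd p))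
    (hk : (headImage (ρ ∘ mapHead τ p)).card = k) : headExt (ρ ∘ mapHead τ p) hk = ρ := by
  funext y
  induction y using Fin.addCases <;> simp [orderEmbOfFin_headImage_comp_mapHead hτ hρ]

end MapHeadFactorization

section TripleFactorization

variable {m n p k K : ℕ}

lemma mapHead_surjective {τ : Fin m → Fin k} (hτ : Surjective τ) : Surjective (mapHead τ p) := by
  intro y
  induction y using Fin.addCases with
  | left x => obtain ⟨j, rfl⟩ := hτ x; exact ⟨Fin.castAdd p j, mapHead_castAdd τ j⟩
  | right z => exact ⟨Fin.natAdd m z, mapHead_natAdd τ z⟩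

lemma isTripleShuffle_comp_mapHead {τ : Fin (m + n) → Fin k} {ρ : Fin (k + p) → Fin K}
    (hτ : IsOverlappingShuffle m n τ) (hρ : IsOverlappingShuffle k p ρ) :
    IsTripleShuffle m n p (ρ ∘ mapHead τ p) := by
  obtain ⟨hτs, hτ₁, hτ₂⟩ := isOverlappingShuffle_iff.mp hτ
  obtain ⟨hρs, hρ₁, hρ₂⟩ := isOverlappingShuffle_iff.mp hρ
  refine ⟨hρs.comp (mapHead_surjective hτs), ?_, ?_, ?_⟩
  · convert hρ₁.comp hτ₁ using 1; funext i; simp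
  · convert hρ₁.comp hτ₂ using 1; funext i; simp
  · convert hρ₂ using 1; funext i; simp

variable {σ : Fin (m + n + p) → Fin K}

lemma isOverlappingShuffle_headRank (hσ : IsTripleShuffle m n p σ)
    (hk : (headImage σ).card = k) : IsOverlappingShuffle m n (headRank σ hk) :=
  isOverlappingShuffle_iff.mpr
    ⟨headRank_surjective, strictMono_headRank_comp hσ.2.1, strictMono_headRank_comp hσ.2.2.1⟩

lemma isOverlappingShuffle_headExt (hσ : IsTripleShuffle m n p σ)
    (hk : (headImage σ).card = k) : IsOverlappingShuffle k p (headExt σ hk) := by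
  refine isOverlappingShuffle_iff.mpr ⟨?_, ?_, ?_⟩
  · exact Surjective.of_comp (headExt_comp_mapHead_headRank (hk := hk) ▸ hσ.1)
  · convert ((headImage σ).orderEmbOfFin hk).strictMono using 1; funext x; simp
  · convert hσ.2.2.2 using 1; funext z; simp

end TripleFactorization

abbrev ShuffleSet (α β δ : List ℕ) : Type :=
  {τ : Fin (α.length + β.length) → Fin δ.length //
    IsOverlappingShuffle α.length β.length τ ∧ gammaComp α β τ = δ}

lemma pushforward_comp_mapHead (α β γ ε : List ℕ) {K : ℕ}
    {τ : Fin (α.length + β.length) → Fin ε.length} (hτ : gammaComp α β τ = ε)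
    (ρ : Fin (ε.length + γ.length) → Fin K) :
    pushforward (fun j : Fin (α.length + β.length + γ.length) => (α ++ β ++ γ).getD j 0)
      (ρ ∘ mapHead τ γ.length) = gammaComp ε γ ρ := by
  rw [← pushforward_pushforward, pushforward_mapHead (α ++ β) γ List.length_append τ,
    ← gammaComp_eq_pushforward, hτ]
  rfl

-- `γ^τ` for the first factor `τ` of `σ = ρ ∘ mapHead τ p`.
noncomputable def headComp (α β : List ℕ) {p K : ℕ} (σ : Fin (α.length + β.length + p) → Fin K) :
    List ℕ :=
  gammaComp α β (headRank σ rfl)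

lemma headComp_eq_gammaComp (α β : List ℕ) {p k K : ℕ}
    {σ : Fin (α.length + β.length + p) → Fin K} (hk : (headImage σ).card = k) :
    headComp α β σ = gammaComp α β (headRank σ hk) := by
  subst hk; rfl

@[simp]
lemma length_headComp (α β : List ℕ) {p K : ℕ} (σ : Fin (α.length + β.length + p) → Fin K) :
    (headComp α β σ).length = (headImage σ).card := by
  simp [headComp, gammaComp_eq_pushforward]

noncomputable def shuffleSetProdEquiv (α β γ δ ε : List ℕ) :
    ShuffleSet α β ε × ShuffleSet ε γ δ ≃
      {σ : TripleShuffleSet α β γ δ // headComp α β σ.1 = ε} where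
  toFun q :=
    ⟨⟨q.2.1 ∘ mapHead q.1.1 γ.length, isTripleShuffle_comp_mapHead q.1.2.1 q.2.2.1,
      (pushforward_comp_mapHead α β γ ε q.1.2.2 _).trans q.2.2.2⟩, by
      have hτ := (isOverlappingShuffle_iff.mp q.1.2.1).1
      have hρ := (isOverlappingShuffle_iff.mp q.2.2.1).2.1
      rw [headComp_eq_gammaComp α β (card_headImage_comp_mapHead hτ hρ),
        headRank_comp_mapHead hτ hρ]
      exact q.1.2.2⟩
  invFun σ :=
    have hk : (headImage σ.1.1).card = ε.length :=
      (length_headComp α β σ.1.1).symm.trans (congrArg List.length σ.2)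
    (⟨headRank σ.1.1 hk, isOverlappingShuffle_headRank σ.1.2.1 hk,
      (headComp_eq_gammaComp α β hk).symm.trans σ.2⟩,
     ⟨headExt σ.1.1 hk, isOverlappingShuffle_headExt σ.1.2.1 hk, by
      rw [← pushforward_comp_mapHead α β γ ε ((headComp_eq_gammaComp α β hk).symm.trans σ.2),
        headExt_comp_mapHead_headRank]
      exact σ.1.2.2⟩)
  left_inv q := by
    have hτ := (isOverlappingShuffle_iff.mp q.1.2.1).1
    have hρ := (isOverlappingShuffle_iff.mp q.2.2.1).2.1
    exact Prod.ext (Subtype.ext (headRank_comp_mapHead hτ hρ _))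
      (Subtype.ext (headExt_comp_mapHead hτ hρ _))
  right_inv σ := Subtype.ext (Subtype.ext headExt_comp_mapHead_headRank)

lemma finsum_card_fiber {T A : Type*} [Finite T] (f : T → A) :
    ∑ᶠ a, Nat.card {t // f t = a} = Nat.card T := by
  have := Fintype.ofFinite T
  have hsupp : support (fun a => Nat.card {t // f t = a}) ⊆ univ.image f := by
    intro a ha
    obtain ⟨⟨t, rfl⟩⟩ := (Nat.card_ne_zero.mp ha).1
    simp
  rw [finsum_eq_sum_of_support_subset _ hsupp, Nat.card_eq_fintype_card, ← card_univ,
    card_eq_sum_card_image f]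
  simp [Nat.card_eq_fintype_card, Fintype.card_subtype]

lemma finsum_shuffleCoeff_mul_shuffleCoeff (α β γ δ : List ℕ) :
    ∑ᶠ ε, shuffleCoeff α β ε * shuffleCoeff ε γ δ = tripleCoeff α β γ δ := by
  rw [tripleCoeff, ← finsum_card_fiber fun σ : TripleShuffleSet α β γ δ => headComp α β σ.1]
  refine finsum_congr fun ε => ?_
  rw [shuffleCoeff, shuffleCoeff, ← Nat.card_prod]
  exact Nat.card_congr (shuffleSetProdEquiv α β γ δ ε)

theorem stmt_15_general (α β γ : List ℕ) :
    (∀ δ : List ℕ, shuffleCoeff α β δ = shuffleCoeff β α δ) ∧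
    (∀ δ : List ℕ,
      ∑ᶠ ε : List ℕ, shuffleCoeff α β ε * shuffleCoeff ε γ δ
        = ∑ᶠ ε : List ℕ, shuffleCoeff β γ ε * shuffleCoeff α ε δ) := by
  refine ⟨shuffleCoeff_comm α β, fun δ => ?_⟩
  calc ∑ᶠ ε, shuffleCoeff α β ε * shuffleCoeff ε γ δ
      = tripleCoeff α β γ δ := finsum_shuffleCoeff_mul_shuffleCoeff α β γ δ
    _ = tripleCoeff β γ α δ := tripleCoeff_rotate α β γ δ
    _ = ∑ᶠ ε, shuffleCoeff β γ ε * shuffleCoeff ε α δ :=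
        (finsum_shuffleCoeff_mul_shuffleCoeff β γ α δ).symm
    _ = ∑ᶠ ε, shuffleCoeff β γ ε * shuffleCoeff α ε δ := by simp_rw [shuffleCoeff_comm α]

/-- The overlapping shuffle product is commutative and associative, as formal
ℤ-linear combinations of compositions (expressed coefficientwise). -/
theorem stmt_15 (α β γ : List ℕ) (hα : ∀ a ∈ α, 0 < a) (hβ : ∀ a ∈ β, 0 < a)
    (hγ : ∀ a ∈ γ, 0 < a) :
    (∀ δ : List ℕ, shuffleCoeff α β δ = shuffleCoeff β α δ) ∧
    (∀ δ : List ℕ,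
      ∑ᶠ ε : List ℕ, shuffleCoeff α β ε * shuffleCoeff ε γ δ
        = ∑ᶠ ε : List ℕ, shuffleCoeff β γ ε * shuffleCoeff α ε δ) :=
  stmt_15_general α β γ
end
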